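/- (Makespan Lower Bound for random MAPF on 3D grids.) Let m1 ≥ m2 ≥ m3 ≥ 1, let α ∈ (0, 1/2), set a_j = ⌊α·m_j⌋ for j = 1, 2, 3, and let n ≥ 1. Let s_1, g_1, …, s_n, g_n be 2n mutually independent random vertices, each uniformly distributed on V = Fin m1 × Fin m2 × Fin m3. Then with probability at least 1 − (1 − (a1·a2·a3/(m1·m2·m3))²)^n, there is an agent i whose start s_i lies in the corner box [0, a1) × [0, a2) × [0, a3) and whose goal g_i lies in the opposite corner box [m1−a1, m1) × [m2−a2, m2) × [m3−a3, m3), and hence the maximum over agents of the ℓ1 distance from start to goal is at least m1 + m2 + m3 − 2·(a1 + a2 + a3). -/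

import Mathlib

/-- The ℓ₁ (Manhattan) distance between two vertices of the `m1 × m2 × m3`
grid. -/
def MDist3 {m1 m2 m3 : ℕ} (u v : Fin m1 × Fin m2 × Fin m3) : ℕ :=
  (((u.1 : ℕ) : ℤ) - ((v.1 : ℕ) : ℤ)).natAbs +
    (((u.2.1 : ℕ) : ℤ) - ((v.2.1 : ℕ) : ℤ)).natAbs +
    (((u.2.2 : ℕ) : ℤ) - ((v.2.2 : ℕ) : ℤ)).natAbs

/-!
For a single agent the start lies in the lower corner box and the goal in the opposite one with
probability `p = (a1 a2 a3 / (m1 m2 m3))²`; the agents are independent, so no agent does with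
probability `(1 - p)ⁿ`. Counting functions `Fin n → V × V` makes this exact. Since `2 aⱼ ≤ mⱼ`,
the two boxes are separated in every coordinate, which gives the distance bound.
-/

open Finset

section Counting

variable {α β γ : Type*} [Fintype α] [Fintype β] [Fintype γ]

theorem card_filter_fst_and_snd (p : α → Prop) (q : β → Prop) [DecidablePred p]
    [DecidablePred q] : #{x : α × β | p x.1 ∧ q x.2} = #{a | p a} * #{b | q b} := by
  rw [← card_product, ← filter_product, univ_product_univ]

theorem card_filter_box (p : α → Prop) (q : β → Prop) (r : γ → Prop) [DecidablePred p]
    [DecidablePred q] [DecidablePred r] :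
    #{x : α × β × γ | p x.1 ∧ q x.2.1 ∧ r x.2.2} = #{a | p a} * #{b | q b} * #{c | r c} := by
  rw [card_filter_fst_and_snd p fun y : β × γ ↦ q y.1 ∧ r y.2, card_filter_fst_and_snd, mul_assoc]

theorem card_filter_forall_apply {ι : Type*} [Fintype ι] [DecidableEq ι] (p : α → Prop)
    [DecidablePred p] : #{ω : ι → α | ∀ i, p (ω i)} = #{a | p a} ^ Fintype.card ι := by
  have : ({ω | ∀ i, p (ω i)} : Finset (ι → α)) = Fintype.piFinset fun _ ↦ {a | p a} := by
    ext ω; simp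
  rw [this, Fintype.card_piFinset, prod_const, card_univ]

theorem card_filter_exists_apply_div_card {ι : Type*} [Fintype ι] [DecidableEq ι]
    (p : α → Prop) [DecidablePred p] [DecidablePred fun ω : ι → α ↦ ∃ i, p (ω i)] :
    (#{ω : ι → α | ∃ i, p (ω i)} : ℝ) / Fintype.card (ι → α) =
      1 - (1 - (#{a | p a} : ℝ) / Fintype.card α) ^ Fintype.card ι := by
  rcases isEmpty_or_nonempty α with hα | _
  -- both sides are `0`, the right one through `0 / 0 = 0`
  · simpa using .inl fun ω i ↦ isEmptyElim (ω i)
  have hcard : (0 : ℝ) < Fintype.card α := by exact_mod_cast Fintype.card_pos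
  have hp : (#{a | p a} : ℝ) + #{a | ¬p a} = Fintype.card α := by
    exact_mod_cast card_filter_add_card_filter_not (s := univ) p
  have hexists : (#{ω : ι → α | ∃ i, p (ω i)} : ℝ) + #{a | ¬p a} ^ Fintype.card ι =
      Fintype.card α ^ Fintype.card ι := by
    have := card_filter_add_card_filter_not (s := univ) fun ω : ι → α ↦ ∃ i, p (ω i)
    simp only [not_exists, card_filter_forall_apply fun a ↦ ¬p a, card_univ,
      Fintype.card_fun] at this
    exact_mod_cast this
  have hq : 1 - (#{a | p a} : ℝ) / Fintype.card α = #{a | ¬p a} / Fintype.card α := by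
    field_simp
    linarith
  rw [Fintype.card_fun, Nat.cast_pow, hq, div_pow, eq_sub_iff_add_eq, ← add_div, hexists,
    div_self (by positivity)]

end Counting

theorem Fin.card_filter_sub_le_val (m a : ℕ) : #{i : Fin m | m - a ≤ i} = min m a := by
  have := card_filter_add_card_filter_not (s := (univ : Finset (Fin m))) fun i ↦ (i : ℕ) < m - a
  simp only [Fin.card_filter_val_lt, not_lt, card_univ, Fintype.card_fin] at this
  omega

theorem two_mul_floor_mul_le {α : ℝ} (hα : α ≤ 1 / 2) (m : ℕ) : 2 * ⌊α * m⌋₊ ≤ m := by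
  have : ⌊α * m⌋₊ ≤ m / 2 := by
    rw [← Nat.floor_div_eq_div (K := ℝ)]
    exact Nat.floor_le_floor (by push_cast; nlinarith [(Nat.cast_nonneg m : (0 : ℝ) ≤ m)])
  omega

def IsOppositeCornerPair {m1 m2 m3 : ℕ} (a1 a2 a3 : ℕ)
    (v : (Fin m1 × Fin m2 × Fin m3) × (Fin m1 × Fin m2 × Fin m3)) : Prop :=
  (v.1.1 : ℕ) < a1 ∧ (v.1.2.1 : ℕ) < a2 ∧ (v.1.2.2 : ℕ) < a3 ∧
    m1 - a1 ≤ (v.2.1 : ℕ) ∧ m2 - a2 ≤ (v.2.2.1 : ℕ) ∧ m3 - a3 ≤ (v.2.2.2 : ℕ)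

instance {m1 m2 m3 : ℕ} (a1 a2 a3 : ℕ) :
    DecidablePred (IsOppositeCornerPair (m1 := m1) (m2 := m2) (m3 := m3) a1 a2 a3) :=
  fun _ ↦ by unfold IsOppositeCornerPair; infer_instance

section Corners

variable (m1 m2 m3 a1 a2 a3 : ℕ)

theorem card_filter_lower_corner :
    #{u : Fin m1 × Fin m2 × Fin m3 | (u.1 : ℕ) < a1 ∧ (u.2.1 : ℕ) < a2 ∧ (u.2.2 : ℕ) < a3} =
      min m1 a1 * min m2 a2 * min m3 a3 := by
  rw [card_filter_box (fun i : Fin m1 ↦ (i : ℕ) < a1) (fun i : Fin m2 ↦ (i : ℕ) < a2)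
    (fun i : Fin m3 ↦ (i : ℕ) < a3)]
  simp only [Fin.card_filter_val_lt]

theorem card_filter_upper_corner :
    #{u : Fin m1 × Fin m2 × Fin m3 |
      m1 - a1 ≤ (u.1 : ℕ) ∧ m2 - a2 ≤ (u.2.1 : ℕ) ∧ m3 - a3 ≤ (u.2.2 : ℕ)} =
      min m1 a1 * min m2 a2 * min m3 a3 := by
  rw [card_filter_box (fun i : Fin m1 ↦ m1 - a1 ≤ (i : ℕ)) (fun i : Fin m2 ↦ m2 - a2 ≤ (i : ℕ))
    (fun i : Fin m3 ↦ m3 - a3 ≤ (i : ℕ))]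
  simp only [Fin.card_filter_sub_le_val]

theorem card_filter_isOppositeCornerPair :
    #{v : (Fin m1 × Fin m2 × Fin m3) × (Fin m1 × Fin m2 × Fin m3) |
      IsOppositeCornerPair a1 a2 a3 v} = (min m1 a1 * min m2 a2 * min m3 a3) ^ 2 := by
  have h := card_filter_fst_and_snd
    (fun u : Fin m1 × Fin m2 × Fin m3 ↦ (u.1 : ℕ) < a1 ∧ (u.2.1 : ℕ) < a2 ∧ (u.2.2 : ℕ) < a3)
    (fun u : Fin m1 × Fin m2 × Fin m3 ↦
      m1 - a1 ≤ (u.1 : ℕ) ∧ m2 - a2 ≤ (u.2.1 : ℕ) ∧ m3 - a3 ≤ (u.2.2 : ℕ))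
  simp only [and_assoc] at h
  unfold IsOppositeCornerPair
  rw [h, card_filter_lower_corner, card_filter_upper_corner, sq]

theorem le_mdist3_of_opposite_corners (h1 : 2 * a1 ≤ m1) (h2 : 2 * a2 ≤ m2) (h3 : 2 * a3 ≤ m3)
    {u v : Fin m1 × Fin m2 × Fin m3}
    (hu : (u.1 : ℕ) < a1 ∧ (u.2.1 : ℕ) < a2 ∧ (u.2.2 : ℕ) < a3)
    (hv : m1 - a1 ≤ (v.1 : ℕ) ∧ m2 - a2 ≤ (v.2.1 : ℕ) ∧ m3 - a3 ≤ (v.2.2 : ℕ)) :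
    m1 + m2 + m3 - 2 * (a1 + a2 + a3) ≤ MDist3 u v := by
  unfold MDist3
  omega

end Corners

open Classical in
theorem random_mapf_makespan_lower_bound_3d_general
    (m1 m2 m3 n : ℕ)
    (α : ℝ) (hα1 : α < 1 / 2)
    (a1 a2 a3 : ℕ) (ha1 : a1 = ⌊α * m1⌋₊) (ha2 : a2 = ⌊α * m2⌋₊) (ha3 : a3 = ⌊α * m3⌋₊) :
    1 - (1 - ((a1 : ℝ) * (a2 : ℝ) * (a3 : ℝ) / ((m1 : ℝ) * (m2 : ℝ) * (m3 : ℝ))) ^ 2) ^ n ≤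
      ((Finset.univ.filter
          (fun ω : Fin n → (Fin m1 × Fin m2 × Fin m3) × (Fin m1 × Fin m2 × Fin m3) =>
            ∃ i, ((ω i).1.1 : ℕ) < a1 ∧ ((ω i).1.2.1 : ℕ) < a2 ∧ ((ω i).1.2.2 : ℕ) < a3 ∧
              m1 - a1 ≤ ((ω i).2.1 : ℕ) ∧ m2 - a2 ≤ ((ω i).2.2.1 : ℕ) ∧
              m3 - a3 ≤ ((ω i).2.2.2 : ℕ))).card : ℝ) /
        (Fintype.card
          (Fin n → (Fin m1 × Fin m2 × Fin m3) × (Fin m1 × Fin m2 × Fin m3)) : ℝ) ∧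
    1 - (1 - ((a1 : ℝ) * (a2 : ℝ) * (a3 : ℝ) / ((m1 : ℝ) * (m2 : ℝ) * (m3 : ℝ))) ^ 2) ^ n ≤
      ((Finset.univ.filter
          (fun ω : Fin n → (Fin m1 × Fin m2 × Fin m3) × (Fin m1 × Fin m2 × Fin m3) =>
            ∃ i, m1 + m2 + m3 - 2 * (a1 + a2 + a3) ≤ MDist3 (ω i).1 (ω i).2)).card : ℝ) /
        (Fintype.card
          (Fin n → (Fin m1 × Fin m2 × Fin m3) × (Fin m1 × Fin m2 × Fin m3)) : ℝ) := by
  have hm1 : 2 * a1 ≤ m1 := ha1 ▸ two_mul_floor_mul_le hα1.le m1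
  have hm2 : 2 * a2 ≤ m2 := ha2 ▸ two_mul_floor_mul_le hα1.le m2
  have hm3 : 2 * a3 ≤ m3 := ha3 ▸ two_mul_floor_mul_le hα1.le m3
  have hprob := card_filter_exists_apply_div_card (ι := Fin n)
    (IsOppositeCornerPair (m1 := m1) (m2 := m2) (m3 := m3) a1 a2 a3)
  rw [card_filter_isOppositeCornerPair, min_eq_right (by omega : a1 ≤ m1),
    min_eq_right (by omega : a2 ≤ m2), min_eq_right (by omega : a3 ≤ m3)] at hprob
  simp only [Fintype.card_prod, Fintype.card_fin, ← mul_assoc, ← sq] at hprob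
  push_cast at hprob
  rw [← div_pow] at hprob
  refine ⟨hprob.ge, hprob.symm.trans_le ?_⟩
  refine div_le_div_of_nonneg_right ?_ (Nat.cast_nonneg _)
  refine Nat.cast_le.2 (card_le_card (monotone_filter_right _ fun ω _ ⟨i, hs1, hs2, hs3, hg⟩ ↦ ?_))
  exact ⟨i, le_mdist3_of_opposite_corners _ _ _ _ _ _ hm1 hm2 hm3 ⟨hs1, hs2, hs3⟩ hg⟩

open Classical in
/-- Makespan lower bound for random MAPF on 3D grids: with probability at
least `1 - (1 - (a1 a2 a3 / (m1 m2 m3))²)^n` (uniform measure on `(V × V)^n`),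
some agent has its start in the corner box `[0,a1) × [0,a2) × [0,a3)` and its
goal in the opposite corner box, and hence with at least that probability the
maximum start-goal ℓ₁ distance over agents is at least
`m1 + m2 + m3 - 2 (a1 + a2 + a3)`. -/
theorem random_mapf_makespan_lower_bound_3d
    (m1 m2 m3 n : ℕ) (h32 : m3 ≤ m2) (h21 : m2 ≤ m1) (h3 : 1 ≤ m3) (hn : 1 ≤ n)
    (α : ℝ) (hα0 : 0 < α) (hα1 : α < 1 / 2)
    (a1 a2 a3 : ℕ) (ha1 : a1 = ⌊α * m1⌋₊) (ha2 : a2 = ⌊α * m2⌋₊) (ha3 : a3 = ⌊α * m3⌋₊) :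
    1 - (1 - ((a1 : ℝ) * (a2 : ℝ) * (a3 : ℝ) / ((m1 : ℝ) * (m2 : ℝ) * (m3 : ℝ))) ^ 2) ^ n ≤
      ((Finset.univ.filter
          (fun ω : Fin n → (Fin m1 × Fin m2 × Fin m3) × (Fin m1 × Fin m2 × Fin m3) =>
            ∃ i, ((ω i).1.1 : ℕ) < a1 ∧ ((ω i).1.2.1 : ℕ) < a2 ∧ ((ω i).1.2.2 : ℕ) < a3 ∧
              m1 - a1 ≤ ((ω i).2.1 : ℕ) ∧ m2 - a2 ≤ ((ω i).2.2.1 : ℕ) ∧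
              m3 - a3 ≤ ((ω i).2.2.2 : ℕ))).card : ℝ) /
        (Fintype.card
          (Fin n → (Fin m1 × Fin m2 × Fin m3) × (Fin m1 × Fin m2 × Fin m3)) : ℝ) ∧
    1 - (1 - ((a1 : ℝ) * (a2 : ℝ) * (a3 : ℝ) / ((m1 : ℝ) * (m2 : ℝ) * (m3 : ℝ))) ^ 2) ^ n ≤
      ((Finset.univ.filter
          (fun ω : Fin n → (Fin m1 × Fin m2 × Fin m3) × (Fin m1 × Fin m2 × Fin m3) =>
            ∃ i, m1 + m2 + m3 - 2 * (a1 + a2 + a3) ≤ MDist3 (ω i).1 (ω i).2)).card : ℝ) /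
        (Fintype.card
          (Fin n → (Fin m1 × Fin m2 × Fin m3) × (Fin m1 × Fin m2 × Fin m3)) : ℝ) :=
  random_mapf_makespan_lower_bound_3d_general m1 m2 m3 n α hα1 a1 a2 a3 ha1 ha2 ha3
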